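/- Let ρ : (0,1] → ℝ be a nonnegative measurable function such that r ↦ r⁴ρ(r) is integrable on (0,1) and satisfies the second-moment normalization ∫₀¹ r⁴ρ(r) dr = 3/(2π). Then for every δ > 0 and every k ∈ ℤ³ \ {0}, the 3D nonlocal Fourier symbol satisfies the upper bound λ_δ(k) ≤ |k|². -/

import Mathlib

/-
Since `1 - cos x ≤ x² / 2`, the inner integral at angle `θ` is at most
`(δ |k| cos θ)² / 2 · ∫₀¹ r⁴ ρ(r) dr = (δ |k|)² cos² θ · 3 / (4π)`, and
`∫₀^{π/2} sin θ cos² θ dθ = 1/3`; the prefactor `4π / δ²` turns this into exactly `|k|²`.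
-/

open Real MeasureTheory

/-- Euclidean norm of a nonzero integer vector `k ∈ ℤ³`. -/
noncomputable def knorm3 (k : ℤ × ℤ × ℤ) : ℝ :=
  Real.sqrt ((k.1 : ℝ) ^ 2 + (k.2.1 : ℝ) ^ 2 + (k.2.2 : ℝ) ^ 2)

/-- The 3D Fourier symbol of the nonlocal diffusion operator:
`λ_δ(k) = (4π/δ²) ∫₀^{π/2} sin θ ∫₀¹ r² ρ(r) (1 − cos(r δ |k| cos θ)) dr dθ`. -/
noncomputable def lambdaDelta3 (ρ : ℝ → ℝ) (δ κ : ℝ) : ℝ :=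
  (4 * π / δ ^ 2) * ∫ θ in (0:ℝ)..(π / 2), Real.sin θ *
    ∫ r in (0:ℝ)..1, r ^ 2 * ρ r * (1 - Real.cos (r * δ * κ * Real.cos θ))

-- A non-integrable `f` has the junk integral `0`, which is still below `∫ g ≥ 0`.
theorem intervalIntegral.integral_mono_on_of_nonneg {μ : Measure ℝ} {f g : ℝ → ℝ} {a b : ℝ}
    (hab : a ≤ b) (hf : ∀ x ∈ Set.Ioc a b, 0 ≤ f x) (hfg : ∀ x ∈ Set.Ioc a b, f x ≤ g x)
    (hg : IntervalIntegrable g μ a b) :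
    ∫ x in a..b, f x ∂μ ≤ ∫ x in a..b, g x ∂μ := by
  simpa only [intervalIntegral.integral_of_le hab] using setIntegral_mono_of_nonneg hf hfg hg.1

theorem Real.one_sub_cos_le_sq_div_two (x : ℝ) : 1 - cos x ≤ x ^ 2 / 2 := by
  linarith [one_sub_sq_div_two_le_cos (x := x)]

section RadialIntegral

variable {ρ : ℝ → ℝ} {a b : ℝ}

theorem integral_sq_mul_one_sub_cos_nonneg (hab : a ≤ b)
    (hρ : ∀ r ∈ Set.Ioc a b, 0 ≤ ρ r) (c : ℝ) :
    0 ≤ ∫ r in a..b, r ^ 2 * ρ r * (1 - cos (r * c)) := by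
  rw [intervalIntegral.integral_of_le hab]
  exact setIntegral_nonneg_of_ae_restrict <| (ae_restrict_iff' measurableSet_Ioc).mpr <|
    ae_of_all _ fun r hr => mul_nonneg (mul_nonneg (sq_nonneg r) (hρ r hr))
      (sub_nonneg.mpr (cos_le_one _))

theorem integral_sq_mul_one_sub_cos_le (hab : a ≤ b) (hρ : ∀ r ∈ Set.Ioc a b, 0 ≤ ρ r)
    (hint : IntervalIntegrable (fun r => r ^ 4 * ρ r) volume a b) (c : ℝ) :
    ∫ r in a..b, r ^ 2 * ρ r * (1 - cos (r * c)) ≤ c ^ 2 / 2 * ∫ r in a..b, r ^ 4 * ρ r := by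
  rw [← intervalIntegral.integral_const_mul]
  refine intervalIntegral.integral_mono_on_of_nonneg hab (fun r hr => ?_) (fun r hr => ?_)
    (hint.const_mul _)
  · exact mul_nonneg (mul_nonneg (sq_nonneg r) (hρ r hr)) (sub_nonneg.mpr (cos_le_one _))
  · calc r ^ 2 * ρ r * (1 - cos (r * c)) ≤ r ^ 2 * ρ r * ((r * c) ^ 2 / 2) :=
          mul_le_mul_of_nonneg_left (one_sub_cos_le_sq_div_two _)
            (mul_nonneg (sq_nonneg r) (hρ r hr))
      _ = c ^ 2 / 2 * (r ^ 4 * ρ r) := by ring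

end RadialIntegral

theorem integral_sin_mul_le_div_three {f : ℝ → ℝ} {C : ℝ}
    (hf : ∀ θ ∈ Set.Ioc 0 (π / 2), 0 ≤ f θ) (hfC : ∀ θ ∈ Set.Ioc 0 (π / 2), f θ ≤ C * cos θ ^ 2) :
    ∫ θ in (0:ℝ)..(π / 2), sin θ * f θ ≤ C / 3 := by
  have hsin : ∀ θ ∈ Set.Ioc 0 (π / 2), 0 ≤ sin θ := fun θ hθ =>
    sin_nonneg_of_nonneg_of_le_pi hθ.1.le (by linarith [hθ.2, pi_pos])
  calc ∫ θ in (0:ℝ)..(π / 2), sin θ * f θ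
      ≤ ∫ θ in (0:ℝ)..(π / 2), C * (sin θ * cos θ ^ 2) :=
        intervalIntegral.integral_mono_on_of_nonneg (by positivity)
          (fun θ hθ => mul_nonneg (hsin θ hθ) (hf θ hθ))
          (fun θ hθ => (mul_le_mul_of_nonneg_left (hfC θ hθ) (hsin θ hθ)).trans_eq (by ring))
          (by apply Continuous.intervalIntegrable; fun_prop)
    _ = C / 3 := by
      rw [intervalIntegral.integral_const_mul, integral_sin_mul_cos_sq, cos_zero, cos_pi_div_two]
      ring

theorem lambdaDelta3_upper_bound_general (ρ : ℝ → ℝ)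
    (hnonneg : ∀ r ∈ Set.Ioc (0:ℝ) 1, 0 ≤ ρ r)
    (hint : IntervalIntegrable (fun r => r ^ 4 * ρ r) volume 0 1)
    (hmoment : (∫ r in (0:ℝ)..1, r ^ 4 * ρ r) = 3 / (2 * π))
    (δ : ℝ) (hδ : 0 < δ) (k : ℤ × ℤ × ℤ) :
    lambdaDelta3 ρ δ (knorm3 k) ≤ (knorm3 k) ^ 2 := by
  set κ := knorm3 k
  have hangle : ∀ θ r : ℝ, r * δ * κ * cos θ = r * (δ * κ * cos θ) := fun _ _ => by ring
  have hinner : ∀ θ, ∫ r in (0:ℝ)..1, r ^ 2 * ρ r * (1 - cos (r * (δ * κ * cos θ)))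
      ≤ (δ * κ) ^ 2 / 2 * (3 / (2 * π)) * cos θ ^ 2 := fun θ =>
    (integral_sq_mul_one_sub_cos_le zero_le_one hnonneg hint _).trans_eq (by rw [hmoment]; ring)
  have houter := integral_sin_mul_le_div_three
    (fun θ _ => integral_sq_mul_one_sub_cos_nonneg zero_le_one hnonneg _) (fun θ _ => hinner θ)
  unfold lambdaDelta3
  simp only [hangle]
  calc 4 * π / δ ^ 2 * _ ≤ 4 * π / δ ^ 2 * ((δ * κ) ^ 2 / 2 * (3 / (2 * π)) / 3) :=
        mul_le_mul_of_nonneg_left houter (by positivity)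
    _ = κ ^ 2 := by field_simp; ring

theorem lambdaDelta3_upper_bound (ρ : ℝ → ℝ) (hmeas : Measurable ρ)
    (hnonneg : ∀ r ∈ Set.Ioc (0:ℝ) 1, 0 ≤ ρ r)
    (hint : IntervalIntegrable (fun r => r ^ 4 * ρ r) volume 0 1)
    (hmoment : (∫ r in (0:ℝ)..1, r ^ 4 * ρ r) = 3 / (2 * π))
    (δ : ℝ) (hδ : 0 < δ) (k : ℤ × ℤ × ℤ) (hk : k ≠ 0) :
    lambdaDelta3 ρ δ (knorm3 k) ≤ (knorm3 k) ^ 2 :=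
  lambdaDelta3_upper_bound_general ρ hnonneg hint hmoment δ hδ k
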